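/- arXiv:2007.10831 — 3 statements merged into one kernel-verified Lean document; each statement's English description precedes it below -/
import Mathlib

section
/- Let r ≥ 3 be odd and q = e^{2πi/r}. Define δ_{+,m} := (-1)^m q^{((r+1)/2) m^2 + m}[m+1] and δ_{-,m} := (-1)^m q^{((r-1)/2) m^2 - m}[m+1]. Then δ_{+,m} = δ_{+,r-m-2} and δ_{-,m} = δ_{-,r-m-2} for every integer 0 ≤ m ≤ r-2. -/
/-- Quantum integer `[n] = (q^n - q^{-n})/(q - q^{-1})`. -/
noncomputable def qint (q : ℂ) (n : ℤ) : ℂ := (q ^ n - q ^ (-n)) / (q - q⁻¹)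

/-- `δ_{+,m} := (-1)^m q^{((r+1)/2)m² + m}[m+1]`. -/
noncomputable def deltaPlus (q : ℂ) (r : ℕ) (m : ℤ) : ℂ :=
  (-1 : ℂ) ^ m * q ^ ((((r : ℤ) + 1) / 2) * m ^ 2 + m) * qint q (m + 1)

/-- `δ_{-,m} := (-1)^m q^{((r-1)/2)m² - m}[m+1]`. -/
noncomputable def deltaMinus (q : ℂ) (r : ℕ) (m : ℤ) : ℂ :=
  (-1 : ℂ) ^ m * q ^ ((((r : ℤ) - 1) / 2) * m ^ 2 - m) * qint q (m + 1)

theorem delta_symm (r : ℕ) (hr : 3 ≤ r) (hodd : Odd r)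
    (q : ℂ) (hq : q = Complex.exp (2 * Real.pi * Complex.I / r))
    (m : ℤ) (h0 : 0 ≤ m) (h1 : m ≤ (r : ℤ) - 2) :
    deltaPlus q r m = deltaPlus q r ((r : ℤ) - m - 2) ∧
      deltaMinus q r m = deltaMinus q r ((r : ℤ) - m - 2) := by
  obtain ⟨s, hs⟩ := hodd
  have hrz : (r : ℤ) = 2 * (s : ℤ) + 1 := by exact_mod_cast congrArg (Nat.cast : ℕ → ℤ) hs
  have hq0 : q ≠ 0 := by rw [hq]; exact Complex.exp_ne_zero _
  have hrc : (r : ℂ) ≠ 0 := by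
    exact_mod_cast Nat.cast_ne_zero.mpr (by omega : r ≠ 0)
  have hq1 : q ^ (r : ℤ) = 1 := by
    rw [hq, zpow_natCast, ← Complex.exp_nat_mul, mul_comm, div_mul_cancel₀ _ hrc,
      Complex.exp_two_pi_mul_I]
  have per : ∀ a t : ℤ, q ^ (a + (r : ℤ) * t) = q ^ a := by
    intro a t
    rw [zpow_add₀ hq0, zpow_mul, hq1, one_zpow, mul_one]
  -- sign flip
  have hodd' : Odd ((r : ℤ) - 2 * m - 2) := by
    refine ⟨(s : ℤ) - m - 1, by omega⟩
  have hsign : (-1 : ℂ) ^ ((r : ℤ) - m - 2) = -(-1 : ℂ) ^ m := by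
    have : (r : ℤ) - m - 2 = m + ((r : ℤ) - 2 * m - 2) := by ring
    rw [this, zpow_add₀ (by norm_num : (-1 : ℂ) ≠ 0), Odd.neg_one_zpow hodd', mul_neg_one]
  -- quantum integer flip
  have hA : q ^ ((r : ℤ) - m - 2 + 1) = q ^ (-(m + 1)) := by
    rw [show (r : ℤ) - m - 2 + 1 = -(m + 1) + (r : ℤ) * 1 by ring, per]
  have hB : q ^ (-((r : ℤ) - m - 2 + 1)) = q ^ (m + 1) := by
    rw [show -((r : ℤ) - m - 2 + 1) = (m + 1) + (r : ℤ) * (-1) by ring, per]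
  have hqint : qint q ((r : ℤ) - m - 2 + 1) = -qint q (m + 1) := by
    unfold qint
    rw [hA, hB, ← neg_div, neg_sub]
  constructor
  · have hk : (((r : ℤ) + 1) / 2) = (s : ℤ) + 1 := by omega
    have hexp : q ^ ((((r : ℤ) + 1) / 2) * ((r : ℤ) - m - 2) ^ 2 + ((r : ℤ) - m - 2)) =
        q ^ ((((r : ℤ) + 1) / 2) * m ^ 2 + m) := by
      rw [show (((r : ℤ) + 1) / 2) * ((r : ℤ) - m - 2) ^ 2 + ((r : ℤ) - m - 2) =
          (((r : ℤ) + 1) / 2) * m ^ 2 + m +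
          (r : ℤ) * ((s : ℤ) * (2 * (s : ℤ) - 2 * m - 1)) by rw [hk, hrz]; ring, per]
    unfold deltaPlus
    rw [hsign, hqint, hexp]
    ring
  · have hk : (((r : ℤ) - 1) / 2) = (s : ℤ) := by omega
    have hexp : q ^ ((((r : ℤ) - 1) / 2) * ((r : ℤ) - m - 2) ^ 2 - ((r : ℤ) - m - 2)) =
        q ^ ((((r : ℤ) - 1) / 2) * m ^ 2 - m) := by
      rw [show (((r : ℤ) - 1) / 2) * ((r : ℤ) - m - 2) ^ 2 - ((r : ℤ) - m - 2) =
          (((r : ℤ) - 1) / 2) * m ^ 2 - m +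
          (r : ℤ) * (((s : ℤ) - 1) * (2 * (s : ℤ) - 2 * m - 1)) by rw [hk, hrz]; ring, per]
    unfold deltaMinus
    rw [hsign, hqint, hexp]
    ring
end

section
/- Let r ≥ 3 be odd and q = e^{2πi/r}, and define δ_{±,m} as (-1)^m q^{((r±1)/2)m^2 ± m}[m+1]. Then ∑_{m=0}^{(r-3)/2} [2m+1] δ_{±,2m} = ∑_{m=0}^{(r-3)/2} (-1)^m [m+1] δ_{±,m} = ∑_{m=0}^{(r-3)/2} q^{((r±1)/2)m^2 ± m} [m+1]^2. -/
open Finset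

/-! Since `((-1)^m)^2 = 1`, the term `(-1)^m [m+1] δ_{±,m}` equals
`g(m) = q^{((r±1)/2)m² ± m} [m+1]²`. As `q^r = 1`, the reflection `m ↦ r - 2 - m` changes
`[m+1]` only by a sign and the exponent of `q` by a multiple of `r`, so `g` is invariant under
it. The reflection swaps parities and maps `{0, …, r - 2}` to itself, so the even labels
`0 ≤ 2m ≤ r - 3` can be traded for the labels `0 ≤ m ≤ (r - 3)/2`. -/

theorem Finset.sum_range_two_mul_eq_of_reflect {M : Type*} [AddCommMonoid M] (k : ℕ)
    (f : ℤ → M) (hf : ∀ n, f (2 * k + 1 - n) = f n) :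
    ∑ m ∈ range (k + 1), f (2 * m) = ∑ m ∈ range (k + 1), f m := by
  refine sum_nbij' (fun m => if 2 * m ≤ k then 2 * m else 2 * k + 1 - 2 * m)
    (fun n => if n % 2 = 0 then n / 2 else (2 * k + 1 - n) / 2) ?_ ?_ ?_ ?_ ?_
  all_goals intro m hm
  all_goals simp only [mem_range] at *
  all_goals try split_ifs <;> omega
  split_ifs with h
  · push_cast; rfl
  · rw [← hf]
    congr 1
    omega

section RootOfUnity

variable {q : ℂ} {N : ℤ}

theorem zpow_eq_zpow_of_eq_add_mul (hq0 : q ≠ 0) (hqN : q ^ N = 1) {a b : ℤ} (c : ℤ)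
    (h : a = b + N * c) : q ^ a = q ^ b := by
  rw [h, zpow_add₀ hq0, zpow_mul, hqN, one_zpow, mul_one]

theorem qint_sub_of_zpow_eq_one (hq0 : q ≠ 0) (hqN : q ^ N = 1) (n : ℤ) :
    qint q (N - n) = -qint q n := by
  rw [qint, qint, zpow_eq_zpow_of_eq_add_mul hq0 hqN 1 (by ring : N - n = -n + N * 1),
    zpow_eq_zpow_of_eq_add_mul hq0 hqN (-1) (by ring : -(N - n) = n + N * (-1))]
  ring

theorem zpow_quadratic_reflect (hq0 : q ≠ 0) (hqN : q ^ N = 1) {s e : ℤ} (hs : 2 * s = N + e)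
    (n : ℤ) : q ^ (s * (N - 2 - n) ^ 2 + e * (N - 2 - n)) = q ^ (s * n ^ 2 + e * n) :=
  -- the exponents differ by `(N - 2 - 2n)(s(N - 2) + e) = N (N - 2 - 2n)(s - 1)`
  zpow_eq_zpow_of_eq_add_mul hq0 hqN ((N - 2 - 2 * n) * (s - 1))
    (by linear_combination (-(N - 2 - 2 * n)) * hs)

theorem zpow_mul_qint_sq_reflect (hq0 : q ≠ 0) (hqN : q ^ N = 1) {s e : ℤ}
    (hs : 2 * s = N + e) (n : ℤ) :
    q ^ (s * (N - 2 - n) ^ 2 + e * (N - 2 - n)) * qint q (N - 2 - n + 1) ^ 2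
      = q ^ (s * n ^ 2 + e * n) * qint q (n + 1) ^ 2 := by
  rw [zpow_quadratic_reflect hq0 hqN hs, show N - 2 - n + 1 = N - (n + 1) by ring,
    qint_sub_of_zpow_eq_one hq0 hqN, neg_sq]

end RootOfUnity

noncomputable def signedDelta (q : ℂ) (s e m : ℤ) : ℂ :=
  (-1 : ℂ) ^ m * q ^ (s * m ^ 2 + e * m) * qint q (m + 1)

theorem deltaPlus_eq_signedDelta (q : ℂ) (r : ℕ) :
    deltaPlus q r = signedDelta q (((r : ℤ) + 1) / 2) 1 := by
  funext m
  simp only [deltaPlus, signedDelta, one_mul]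

theorem deltaMinus_eq_signedDelta (q : ℂ) (r : ℕ) :
    deltaMinus q r = signedDelta q (((r : ℤ) - 1) / 2) (-1) := by
  funext m
  simp only [deltaMinus, signedDelta, neg_one_mul, sub_eq_add_neg]

theorem neg_one_zpow_mul_qint_mul_signedDelta (q : ℂ) (s e m : ℤ) :
    (-1 : ℂ) ^ m * qint q (m + 1) * signedDelta q s e m
      = q ^ (s * m ^ 2 + e * m) * qint q (m + 1) ^ 2 := by
  have hsq : (-1 : ℂ) ^ m * (-1) ^ m = 1 := by
    rw [← mul_zpow]
    norm_num
  rw [signedDelta]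
  linear_combination q ^ (s * m ^ 2 + e * m) * qint q (m + 1) ^ 2 * hsq

theorem sum_range_qint_mul_signedDelta {q : ℂ} {k : ℕ} (hq0 : q ≠ 0)
    (hqN : q ^ (2 * (k : ℤ) + 3) = 1) {s e : ℤ} (hs : 2 * s = 2 * k + 3 + e) :
    (∑ m ∈ range (k + 1), qint q (2 * (m : ℤ) + 1) * signedDelta q s e (2 * m)
        = ∑ m ∈ range (k + 1), (-1 : ℂ) ^ (m : ℤ) * qint q ((m : ℤ) + 1) * signedDelta q s e m) ∧
      (∑ m ∈ range (k + 1), (-1 : ℂ) ^ (m : ℤ) * qint q ((m : ℤ) + 1) * signedDelta q s e m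
        = ∑ m ∈ range (k + 1), q ^ (s * (m : ℤ) ^ 2 + e * m) * qint q ((m : ℤ) + 1) ^ 2) := by
  simp only [neg_one_zpow_mul_qint_mul_signedDelta, and_true]
  have hreflect (n : ℤ) := zpow_mul_qint_sq_reflect hq0 hqN hs n
  simp only [show ∀ n : ℤ, 2 * (k : ℤ) + 3 - 2 - n = 2 * k + 1 - n by intro n; ring] at hreflect
  rw [← sum_range_two_mul_eq_of_reflect k (fun n => q ^ (s * n ^ 2 + e * n) * qint q (n + 1) ^ 2)
    hreflect]
  refine sum_congr rfl fun m _ => ?_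
  rw [← neg_one_zpow_mul_qint_mul_signedDelta, (even_two_mul _).neg_one_zpow, one_mul]

theorem delta_sums (r : ℕ) (hr : 3 ≤ r) (hodd : Odd r)
    (q : ℂ) (hq : q = Complex.exp (2 * Real.pi * Complex.I / r)) :
    ((∑ m ∈ Finset.range ((r - 3) / 2 + 1), qint q (2 * (m : ℤ) + 1) * deltaPlus q r (2 * m)
        = ∑ m ∈ Finset.range ((r - 3) / 2 + 1),
            (-1 : ℂ) ^ (m : ℤ) * qint q ((m : ℤ) + 1) * deltaPlus q r m) ∧
      (∑ m ∈ Finset.range ((r - 3) / 2 + 1),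
          (-1 : ℂ) ^ (m : ℤ) * qint q ((m : ℤ) + 1) * deltaPlus q r m
        = ∑ m ∈ Finset.range ((r - 3) / 2 + 1),
            q ^ ((((r : ℤ) + 1) / 2) * (m : ℤ) ^ 2 + m) * qint q ((m : ℤ) + 1) ^ 2)) ∧
    ((∑ m ∈ Finset.range ((r - 3) / 2 + 1), qint q (2 * (m : ℤ) + 1) * deltaMinus q r (2 * m)
        = ∑ m ∈ Finset.range ((r - 3) / 2 + 1),
            (-1 : ℂ) ^ (m : ℤ) * qint q ((m : ℤ) + 1) * deltaMinus q r m) ∧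
      (∑ m ∈ Finset.range ((r - 3) / 2 + 1),
          (-1 : ℂ) ^ (m : ℤ) * qint q ((m : ℤ) + 1) * deltaMinus q r m
        = ∑ m ∈ Finset.range ((r - 3) / 2 + 1),
            q ^ ((((r : ℤ) - 1) / 2) * (m : ℤ) ^ 2 - m) * qint q ((m : ℤ) + 1) ^ 2)) := by
  obtain ⟨k, hk⟩ : ∃ k, r = 2 * k + 3 := ⟨(r - 3) / 2, by obtain ⟨j, hj⟩ := hodd; omega⟩
  have hζ : IsPrimitiveRoot q r := hq ▸ Complex.isPrimitiveRoot_exp r (by omega)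
  have hq0 : q ≠ 0 := hζ.ne_zero (by omega)
  have hqN : q ^ (2 * (k : ℤ) + 3) = 1 := by exact_mod_cast hk ▸ hζ.pow_eq_one
  rw [show (r - 3) / 2 = k by omega, deltaPlus_eq_signedDelta, deltaMinus_eq_signedDelta]
  have hplus :=
    sum_range_qint_mul_signedDelta hq0 hqN (s := ((r : ℤ) + 1) / 2) (e := 1) (by omega)
  have hminus :=
    sum_range_qint_mul_signedDelta hq0 hqN (s := ((r : ℤ) - 1) / 2) (e := -1) (by omega)
  simp only [one_mul, neg_one_mul, ← sub_eq_add_neg] at hplus hminus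
  exact ⟨hplus, hminus⟩
end

section
/- Let r ≥ 3 be odd, q = e^{2πi/r}, and r ≤ m ≤ 2r-2. On the 2r-dimensional space P_m with basis {a_j, x_k, y_k, b_j : 0 ≤ j ≤ 2r-m-2, 0 ≤ k ≤ m-r}, define the action of K, E, F by the explicit formulas: K·a_j = q^{-m-2j-2}a_j, E·a_j = -[j][m+j+1]a_{j-1}, F·a_j = a_{j+1}; K·x_k = q^{m-2k}x_k, E·x_k = [k][m-k+1]x_{k-1}, F·x_k = x_{k+1} for k < m-r and F·x_{m-r} = a_0; K·y_k = q^{m-2k}y_k, E·y_0 = a_{2r-m-2}, E·y_k = [k][m-k+1]y_{k-1} for k > 0, F·y_k = y_{k+1}; K·b_j = q^{-m-2j-2}b_j, E·b_0 = x_{m-r}, E·b_j = a_{j-1} - [j][m+j+1]b_{j-1} for j > 0, F·b_j = b_{j+1} for j < 2r-m-2 and F·b_{2r-m-2} = y_0 (with all out-of-range basis vectors equal to 0). Then the quantum Casimir C = EF + (q^{-1}K + qK^{-1})/(q-q^{-1})^2 satisfies (C - β_m)^2 = 0 on P_m but C - β_m ≠ 0, where β_m = (q^{m+1} + q^{-m-1})/(q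 - q^{-1})^2. -/
open Matrix
open scoped Classical

/-- Basis index type for the projective module `P_m`: vectors
`a_j` (`0 ≤ j ≤ 2r-m-2`), `x_k` (`0 ≤ k ≤ m-r`), `y_k` (`0 ≤ k ≤ m-r`),
`b_j` (`0 ≤ j ≤ 2r-m-2`). -/
abbrev PIdx (r m : ℕ) :=
  Fin (2 * r - m - 1) ⊕ (Fin (m - r + 1) ⊕ (Fin (m - r + 1) ⊕ Fin (2 * r - m - 1)))

/-- Action of `K` on `P_m` (diagonal). -/
noncomputable def KP (q : ℂ) (r m : ℕ) : Matrix (PIdx r m) (PIdx r m) ℂ :=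
  Matrix.diagonal fun i => match i with
    | Sum.inl j => q ^ (-(m : ℤ) - 2 * ((j : ℕ) : ℤ) - 2)
    | Sum.inr (Sum.inl k) => q ^ ((m : ℤ) - 2 * ((k : ℕ) : ℤ))
    | Sum.inr (Sum.inr (Sum.inl k)) => q ^ ((m : ℤ) - 2 * ((k : ℕ) : ℤ))
    | Sum.inr (Sum.inr (Sum.inr j)) => q ^ (-(m : ℤ) - 2 * ((j : ℕ) : ℤ) - 2)

/-- Inverse of the action of `K` on `P_m`. -/
noncomputable def KPinv (q : ℂ) (r m : ℕ) : Matrix (PIdx r m) (PIdx r m) ℂ :=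
  Matrix.diagonal fun i => match i with
    | Sum.inl j => q ^ ((m : ℤ) + 2 * ((j : ℕ) : ℤ) + 2)
    | Sum.inr (Sum.inl k) => q ^ (-((m : ℤ) - 2 * ((k : ℕ) : ℤ)))
    | Sum.inr (Sum.inr (Sum.inl k)) => q ^ (-((m : ℤ) - 2 * ((k : ℕ) : ℤ)))
    | Sum.inr (Sum.inr (Sum.inr j)) => q ^ ((m : ℤ) + 2 * ((j : ℕ) : ℤ) + 2)

/-- Action of `E` on `P_m`:
`E·a_j = -[j][m+j+1]a_{j-1}`, `E·x_k = [k][m-k+1]x_{k-1}`,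
`E·y_0 = a_{2r-m-2}`, `E·y_k = [k][m-k+1]y_{k-1}` (`k > 0`),
`E·b_0 = x_{m-r}`, `E·b_j = a_{j-1} - [j][m+j+1]b_{j-1}` (`j > 0`). -/
noncomputable def EP (q : ℂ) (r m : ℕ) : Matrix (PIdx r m) (PIdx r m) ℂ :=
  fun i j => match i, j with
    | Sum.inl i, Sum.inl j =>
        if (i : ℕ) + 1 = (j : ℕ)
        then -(qint q ((j : ℕ) : ℤ) * qint q ((m : ℤ) + ((j : ℕ) : ℤ) + 1)) else 0
    | Sum.inr (Sum.inl i), Sum.inr (Sum.inl k) =>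
        if (i : ℕ) + 1 = (k : ℕ)
        then qint q ((k : ℕ) : ℤ) * qint q ((m : ℤ) - ((k : ℕ) : ℤ) + 1) else 0
    | Sum.inl i, Sum.inr (Sum.inr (Sum.inl k)) =>
        if (k : ℕ) = 0 ∧ (i : ℕ) = 2 * r - m - 2 then 1 else 0
    | Sum.inr (Sum.inr (Sum.inl i)), Sum.inr (Sum.inr (Sum.inl k)) =>
        if (i : ℕ) + 1 = (k : ℕ)
        then qint q ((k : ℕ) : ℤ) * qint q ((m : ℤ) - ((k : ℕ) : ℤ) + 1) else 0
    | Sum.inr (Sum.inl i), Sum.inr (Sum.inr (Sum.inr j)) =>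
        if (j : ℕ) = 0 ∧ (i : ℕ) = m - r then 1 else 0
    | Sum.inl i, Sum.inr (Sum.inr (Sum.inr j)) =>
        if (i : ℕ) + 1 = (j : ℕ) then 1 else 0
    | Sum.inr (Sum.inr (Sum.inr i)), Sum.inr (Sum.inr (Sum.inr j)) =>
        if (i : ℕ) + 1 = (j : ℕ)
        then -(qint q ((j : ℕ) : ℤ) * qint q ((m : ℤ) + ((j : ℕ) : ℤ) + 1)) else 0
    | _, _ => 0

/-- Action of `F` on `P_m`:
`F·a_j = a_{j+1}`, `F·x_k = x_{k+1}` (`k < m-r`), `F·x_{m-r} = a_0`,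
`F·y_k = y_{k+1}`, `F·b_j = b_{j+1}` (`j < 2r-m-2`), `F·b_{2r-m-2} = y_0`. -/
noncomputable def FP (q : ℂ) (r m : ℕ) : Matrix (PIdx r m) (PIdx r m) ℂ :=
  fun i j => match i, j with
    | Sum.inl i, Sum.inl j => if (i : ℕ) = (j : ℕ) + 1 then 1 else 0
    | Sum.inr (Sum.inl i), Sum.inr (Sum.inl k) => if (i : ℕ) = (k : ℕ) + 1 then 1 else 0
    | Sum.inl i, Sum.inr (Sum.inl k) =>
        if (k : ℕ) = m - r ∧ (i : ℕ) = 0 then 1 else 0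
    | Sum.inr (Sum.inr (Sum.inl i)), Sum.inr (Sum.inr (Sum.inl k)) =>
        if (i : ℕ) = (k : ℕ) + 1 then 1 else 0
    | Sum.inr (Sum.inr (Sum.inr i)), Sum.inr (Sum.inr (Sum.inr j)) =>
        if (i : ℕ) = (j : ℕ) + 1 then 1 else 0
    | Sum.inr (Sum.inr (Sum.inl i)), Sum.inr (Sum.inr (Sum.inr j)) =>
        if (j : ℕ) = 2 * r - m - 2 ∧ (i : ℕ) = 0 then 1 else 0
    | _, _ => 0

/-!
Each block `a, x, y, b` of `P_m` is a chain along which `F` steps, through `K`-eigenvectors `v_s`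
with `K v_s = q^(M-2s) v_s`, where `M = m` or `M = -m-2`. The Casimir identity
`[s+1][M-s] + (q^(M-2s-1) + q^(2s+1-M))/(q-q⁻¹)² = β_M`, with `β_{-m-2} = β_m`, shows that the
diagonal of `C` is `β_m`: at the end of a chain `EF` has no diagonal term, but there `[M-s]` is
`[r]` or `[-2r]`, which vanishes as `q^r = 1`. The only off-diagonal terms of `EF` come from
`E b_{j+1} = a_j - …` and `E y_0 = a_{2r-m-2}`, so `C - β_m` is the map `b_j ↦ a_j`, whose square
is zero.
-/

lemma sum_fin_ite_val_eq {M : Type*} [AddCommMonoid M] {n t : ℕ} (f : Fin n → M) :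
    (∑ k : Fin n, if (k : ℕ) = t then f k else 0) = if ht : t < n then f ⟨t, ht⟩ else 0 := by
  split_ifs with ht
  · rw [Finset.sum_eq_single ⟨t, ht⟩ (fun k _ hk => if_neg fun h => hk (Fin.ext h)) (by simp)]
    simp
  · exact Finset.sum_eq_zero fun k _ => if_neg (by omega)

lemma qint_neg (q : ℂ) (n : ℤ) : qint q (-n) = -qint q n := by
  simp only [qint, neg_neg]; ring

lemma qint_natCast_mul_eq_zero {q : ℂ} {r : ℕ} (hq : q ^ r = 1) (k : ℤ) :
    qint q (r * k) = 0 := by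
  simp [qint, _root_.zpow_mul, hq]

theorem qint_mul_qint_add_casimir (q : ℂ) (M s : ℤ) :
    qint q (s + 1) * qint q (M - s) +
        ((q - q⁻¹) ^ 2)⁻¹ * (q⁻¹ * q ^ (M - 2 * s) + q * q ^ (-(M - 2 * s))) =
      (q ^ (M + 1) + q ^ (-(M + 1))) / (q - q⁻¹) ^ 2 := by
  by_cases hd : q - q⁻¹ = 0
  · simp [qint, hd]
  have hq : q ≠ 0 := by rintro rfl; simp at hd
  have h1 : q ^ (M + 1) = q ^ (s + 1) * q ^ (M - s) := by rw [← zpow_add₀ hq]; ring_nf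
  have h2 : q⁻¹ * q ^ (M - 2 * s) = q ^ (M - s) / q ^ (s + 1) := by
    rw [← zpow_sub₀ hq, ← _root_.zpow_neg_one, ← zpow_add₀ hq]; ring_nf
  have h3 : q * q ^ (-(M - 2 * s)) = q ^ (s + 1) / q ^ (M - s) := by
    rw [← zpow_one_add₀ hq, ← zpow_sub₀ hq]; ring_nf
  rw [h2, h3]
  simp only [qint, _root_.zpow_neg, h1]
  have ha : q ^ (s + 1) ≠ 0 := zpow_ne_zero _ hq
  have hc : q ^ (M - s) ≠ 0 := zpow_ne_zero _ hq
  generalize q ^ (s + 1) = a at *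
  generalize q ^ (M - s) = c at *
  generalize q - q⁻¹ = d at *
  field_simp
  ring

-- Basis vector `i` is `F ^ depth i` applied to the head of its block, of `K`-weight
-- `q ^ headWeight i`.
abbrev headWeight (r m : ℕ) : PIdx r m → ℤ
  | Sum.inl _ => -(m : ℤ) - 2
  | Sum.inr (Sum.inl _) => m
  | Sum.inr (Sum.inr (Sum.inl _)) => m
  | Sum.inr (Sum.inr (Sum.inr _)) => -(m : ℤ) - 2

abbrev depth (r m : ℕ) : PIdx r m → ℕ
  | Sum.inl j => j
  | Sum.inr (Sum.inl k) => k
  | Sum.inr (Sum.inr (Sum.inl k)) => k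
  | Sum.inr (Sum.inr (Sum.inr j)) => j

abbrev chainLength (r m : ℕ) : PIdx r m → ℕ
  | Sum.inl _ => 2 * r - m - 1
  | Sum.inr (Sum.inl _) => m - r + 1
  | Sum.inr (Sum.inr (Sum.inl _)) => m - r + 1
  | Sum.inr (Sum.inr (Sum.inr _)) => 2 * r - m - 1

def weight (r m : ℕ) (i : PIdx r m) : ℤ := headWeight r m i - 2 * depth r m i

noncomputable def efCoeff (q : ℂ) (r m : ℕ) (i : PIdx r m) : ℂ :=
  if depth r m i + 1 < chainLength r m i then
    qint q (depth r m i + 1) * qint q (headWeight r m i - depth r m i)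
  else 0

def bToA (r m : ℕ) : Matrix (PIdx r m) (PIdx r m) ℂ :=
  fun i j => match i, j with
    | Sum.inl i, Sum.inr (Sum.inr (Sum.inr j)) => if (i : ℕ) = (j : ℕ) then 1 else 0
    | _, _ => 0

lemma KP_eq_diagonal (q : ℂ) (r m : ℕ) :
    KP q r m = diagonal fun i => q ^ weight r m i := by
  unfold KP
  congr 1; funext i
  rcases i with j | k | k | j <;> simp only [weight, headWeight, depth] <;> ring_nf

lemma KPinv_eq_diagonal (q : ℂ) (r m : ℕ) :
    KPinv q r m = diagonal fun i => q ^ (-weight r m i) := by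
  unfold KPinv
  congr 1; funext i
  rcases i with j | k | k | j <;> simp only [weight, headWeight, depth] <;> ring_nf

lemma bToA_sq (r m : ℕ) : bToA r m ^ 2 = 0 := by
  ext i j
  rw [sq, mul_apply]
  refine Finset.sum_eq_zero fun k _ => ?_
  rcases i with i | i | i | i <;> rcases k with k | k | k | k <;> simp [bToA]

lemma bToA_ne_zero {r m : ℕ} (h : m + 2 ≤ 2 * r) : bToA r m ≠ 0 := fun h0 => by
  simpa [bToA] using congrFun (congrFun h0 (Sum.inl ⟨0, by omega⟩))
    (Sum.inr (Sum.inr (Sum.inr ⟨0, by omega⟩)))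

lemma EP_mul_FP (q : ℂ) (r m : ℕ) :
    EP q r m * FP q r m = diagonal (efCoeff q r m) + bToA r m := by
  ext i j
  rcases i with i | i | i | i <;> rcases j with j | j | j | j <;>
    simp only [mul_apply, Fintype.sum_sum_type, EP, FP, bToA, efCoeff, depth, headWeight,
      chainLength, Matrix.add_apply, diagonal_apply, Sum.inl.injEq, Sum.inr.injEq, reduceCtorEq,
      ite_and, mul_ite, mul_zero, mul_one, ite_self, if_true, if_false, dite_eq_ite,
      Finset.sum_const_zero, add_zero, zero_add, Finset.sum_ite_irrel, sum_fin_ite_val_eq]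
  all_goals split_ifs <;> subst_vars <;> first
    | rfl
    | (exfalso; omega)
    | (push_cast; ring_nf; done)
    | (rw [show -(m : ℤ) - 2 - j = -(m + (j + 1) + 1) by ring, qint_neg]; push_cast; ring_nf)

lemma qint_headWeight_sub_depth_eq_zero {q : ℂ} {r m : ℕ} (hq : q ^ r = 1) (hm : r ≤ m)
    (i : PIdx r m) (hi : ¬depth r m i + 1 < chainLength r m i) :
    qint q (headWeight r m i - depth r m i) = 0 := by
  obtain ⟨k, hk⟩ : ∃ k : ℤ, headWeight r m i - depth r m i = r * k := by
    rcases i with j | j | j | j <;> have := j.isLt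
    · exact ⟨-2, by simp only [headWeight, depth, chainLength] at hi ⊢; omega⟩
    · exact ⟨1, by simp only [headWeight, depth, chainLength] at hi ⊢; omega⟩
    · exact ⟨1, by simp only [headWeight, depth, chainLength] at hi ⊢; omega⟩
    · exact ⟨-2, by simp only [headWeight, depth, chainLength] at hi ⊢; omega⟩
  rw [hk, qint_natCast_mul_eq_zero hq]

lemma efCoeff_add_weight_eq {q : ℂ} {r m : ℕ} (hq : q ^ r = 1) (hm : r ≤ m) (i : PIdx r m) :
    efCoeff q r m i + ((q - q⁻¹) ^ 2)⁻¹ * (q⁻¹ * q ^ weight r m i + q * q ^ (-weight r m i)) =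
      (q ^ ((m : ℤ) + 1) + q ^ (-((m : ℤ) + 1))) / (q - q⁻¹) ^ 2 := by
  have hβ : q ^ (headWeight r m i + 1) + q ^ (-(headWeight r m i + 1)) =
      q ^ ((m : ℤ) + 1) + q ^ (-((m : ℤ) + 1)) := by
    rcases i with _ | _ | _ | _ <;> simp only [headWeight] <;>
      first | rfl | (rw [add_comm]; ring_nf)
  have key := qint_mul_qint_add_casimir q (headWeight r m i) (depth r m i)
  rw [hβ] at key
  rw [← key, efCoeff, weight]
  split_ifs with hi
  · rfl
  · rw [qint_headWeight_sub_depth_eq_zero hq hm i hi, mul_zero, zero_add]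

theorem casimir_sub_eq_bToA {q : ℂ} {r m : ℕ} (hq : q ^ r = 1) (hm : r ≤ m) :
    EP q r m * FP q r m + ((q - q⁻¹) ^ 2)⁻¹ • (q⁻¹ • KP q r m + q • KPinv q r m) -
      ((q ^ ((m : ℤ) + 1) + q ^ (-((m : ℤ) + 1))) / (q - q⁻¹) ^ 2) • 1 = bToA r m := by
  rw [EP_mul_FP, KP_eq_diagonal, KPinv_eq_diagonal]
  ext i j
  rcases eq_or_ne i j with rfl | hij
  · simp only [Matrix.sub_apply, Matrix.add_apply, Matrix.smul_apply, diagonal_apply_eq,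
      one_apply_eq, smul_eq_mul, mul_one]
    linear_combination efCoeff_add_weight_eq hq hm i
  · simp [diagonal_apply_ne _ hij, one_apply_ne hij]

theorem casimir_on_projective_general (r m : ℕ) (hr : 3 ≤ r)
    (hm1 : r ≤ m) (hm2 : m ≤ 2 * r - 2)
    (q : ℂ) (hq : q = Complex.exp (2 * Real.pi * Complex.I / r)) :
    (EP q r m * FP q r m + ((q - q⁻¹) ^ 2)⁻¹ • (q⁻¹ • KP q r m + q • KPinv q r m) -
          ((q ^ ((m : ℤ) + 1) + q ^ (-((m : ℤ) + 1))) / (q - q⁻¹) ^ 2) • 1) ^ 2 = 0 ∧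
      EP q r m * FP q r m + ((q - q⁻¹) ^ 2)⁻¹ • (q⁻¹ • KP q r m + q • KPinv q r m) -
          ((q ^ ((m : ℤ) + 1) + q ^ (-((m : ℤ) + 1))) / (q - q⁻¹) ^ 2) • 1 ≠ 0 := by
  have hqr : q ^ r = 1 := hq ▸ (Complex.isPrimitiveRoot_exp r (by omega)).pow_eq_one
  rw [casimir_sub_eq_bToA hqr hm1]
  exact ⟨bToA_sq r m, bToA_ne_zero (by omega)⟩

/-- On the indecomposable projective module `P_m`, the quantum Casimir
`C = EF + (q^{-1}K + qK^{-1})/(q-q^{-1})²` satisfies `(C - β_m)² = 0` but `C - β_m ≠ 0`,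
where `β_m = (q^{m+1} + q^{-m-1})/(q-q^{-1})²`. -/
theorem casimir_on_projective (r m : ℕ) (hr : 3 ≤ r) (hodd : Odd r)
    (hm1 : r ≤ m) (hm2 : m ≤ 2 * r - 2)
    (q : ℂ) (hq : q = Complex.exp (2 * Real.pi * Complex.I / r)) :
    (EP q r m * FP q r m + ((q - q⁻¹) ^ 2)⁻¹ • (q⁻¹ • KP q r m + q • KPinv q r m) -
          ((q ^ ((m : ℤ) + 1) + q ^ (-((m : ℤ) + 1))) / (q - q⁻¹) ^ 2) • 1) ^ 2 = 0 ∧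
      EP q r m * FP q r m + ((q - q⁻¹) ^ 2)⁻¹ • (q⁻¹ • KP q r m + q • KPinv q r m) -
          ((q ^ ((m : ℤ) + 1) + q ^ (-((m : ℤ) + 1))) / (q - q⁻¹) ^ 2) • 1 ≠ 0 :=
  casimir_on_projective_general r m hr hm1 hm2 q hq
end
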